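/- arXiv:2210.06056 — 2 statements merged into one kernel-verified Lean document; each statement's English description precedes it below -/
import Mathlib

section
/- Under the Farey configuration (integers k ≥ 1, 1 ≤ l ≤ k, c_1 ≥ 1, c_2,…,c_l ≥ 2, c_l > 2, and c_{l+1} = ⋯ = c_k = 2), the numerator identity for the q-deformed Farey sum of left q-deformed rational numbers holds: E^♭_k(c_1,…,c_k)_q = q^{k−l+1}·E^♭_l(c_1,…,c_{l−1}, c_l − 1)_q + E^♭_{k−1}(c_1,…,c_{k−1})_q. Equivalently, if α = [[c_1,…,c_k]] is the Farey sum of β = [[c_1,…,c_l − 1]] and γ = [[c_1,…,c_{k−1}]], then the numerators of the left q-deformed rationals satisfy R^♭_α(q) = q^{k−l+1}·R^♭_β(q) + R^♭_γ(q). -/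
noncomputable section

/-- The field ℚ(q) of rational functions over ℚ. -/
abbrev K : Type := RatFunc ℚ

/-- The variable q. -/
def q : K := RatFunc.X

/-- Right q-integer `[n]^♯` with deformation parameter `x`. -/
def qsX (x : K) (n : ℤ) : K := (1 - x ^ n) / (1 - x)

/-- Left q-integer `[n]^♭` with deformation parameter `x`. -/
def qfX (x : K) (n : ℤ) : K := (1 - x ^ (n - 1) + x ^ n - x ^ (n + 1)) / (1 - x)

/-- Right q-integer `[n]^♯_q`. -/
def qs (n : ℤ) : K := qsX q n

/-- Left q-integer `[n]^♭_q`. -/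
def qf (n : ℤ) : K := qfX q n

/-- Right q-deformed Euler continuant `E^♯` (first-row expansion of the
tridiagonal determinant), with parameter `x`. -/
def EsharpX (x : K) : List ℤ → K
  | [] => 1
  | [c] => qsX x c
  | c :: d :: rest => qsX x c * EsharpX x (d :: rest) - x ^ (c - 1) * EsharpX x rest

/-- Left q-deformed Euler continuant `E^♭` (first-row expansion of the
tridiagonal determinant whose (k,k) entry is the left q-integer), with parameter `x`. -/
def EflatX (x : K) : List ℤ → K
  | [] => 1
  | [c] => qfX x c
  | c :: d :: rest => qsX x c * EflatX x (d :: rest) - x ^ (c - 1) * EflatX x rest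

def Esharp (L : List ℤ) : K := EsharpX q L

def Eflat (L : List ℤ) : K := EflatX q L

/-- `E^♯_{j-1}(d_2,…,d_j)` for the input list `(d_1,…,d_j)`, with the
convention `E^♯_{-1}() = 0` when the list is empty. -/
def EsharpD : List ℤ → K
  | [] => 0
  | _ :: rest => Esharp rest

/-- `E^♭_{j-1}(d_2,…,d_j)` for the input list `(d_1,…,d_j)`, with the
convention `E^♭_{-1}() = 1 - q` when the list is empty. -/
def EflatD : List ℤ → K
  | [] => 1 - q
  | _ :: rest => Eflat rest

/-- Left q-deformed negative continued fraction `[[c_1,…,c_k]]^♭_q`. -/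
def nflat : List ℤ → K
  | [] => 0
  | [c] => qf c
  | c :: d :: rest => qs c - q ^ (c - 1) / nflat (d :: rest)

/-- Right q-deformed negative continued fraction `[[c_1,…,c_k]]^♯_q`. -/
def nsharp : List ℤ → K
  | [] => 0
  | [c] => qs c
  | c :: d :: rest => qs c - q ^ (c - 1) / nsharp (d :: rest)

/-- Left q-deformed regular continued fraction, with alternating parameter `x`, `x⁻¹`. -/
def regFlatX : K → List ℤ → K
  | _, [] => 0
  | x, [a] => qfX x a
  | x, a :: d :: rest => qsX x a + x ^ a / regFlatX x⁻¹ (d :: rest)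

/-- Left q-deformed regular continued fraction `[a_1,…,a_{2m}]^♭_q`. -/
def regFlat (L : List ℤ) : K := regFlatX q L

/-- Classical negative continued fraction `[[c_1,…,c_k]] ∈ ℚ`. -/
def negCF : List ℤ → ℚ
  | [] => 0
  | [c] => c
  | c :: d :: rest => c - 1 / negCF (d :: rest)

/-- Classical regular continued fraction `[a_1,…,a_{2m}] ∈ ℚ`. -/
def regCF : List ℤ → ℚ
  | [] => 0
  | [a] => a
  | a :: d :: rest => a + 1 / regCF (d :: rest)

/-- The matrix σ_{1,q} as an invertible 2×2 matrix over ℚ(q). -/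
def σ1 : (Matrix (Fin 2) (Fin 2) K)ˣ where
  val := !![q⁻¹, -q⁻¹; 0, 1]
  inv := !![q, 1; 0, 1]
  val_inv := by
    have hq : (q : K) ≠ 0 := RatFunc.X_ne_zero
    ext i j
    fin_cases i <;> fin_cases j <;>
      simp [Matrix.mul_apply, Fin.sum_univ_two, inv_mul_cancel₀ hq]
  inv_val := by
    have hq : (q : K) ≠ 0 := RatFunc.X_ne_zero
    ext i j
    fin_cases i <;> fin_cases j <;>
      simp [Matrix.mul_apply, Fin.sum_univ_two, mul_inv_cancel₀ hq]

/-- The matrix σ_{2,q} as an invertible 2×2 matrix over ℚ(q). -/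
def σ2 : (Matrix (Fin 2) (Fin 2) K)ˣ where
  val := !![1, 0; 1, q⁻¹]
  inv := !![1, 0; -q, q]
  val_inv := by
    have hq : (q : K) ≠ 0 := RatFunc.X_ne_zero
    ext i j
    fin_cases i <;> fin_cases j <;>
      simp [Matrix.mul_apply, Fin.sum_univ_two, inv_mul_cancel₀ hq]
  inv_val := by
    have hq : (q : K) ≠ 0 := RatFunc.X_ne_zero
    ext i j
    fin_cases i <;> fin_cases j <;>
      simp [Matrix.mul_apply, Fin.sum_univ_two, mul_inv_cancel₀ hq]

/-- The matrix S_q as an invertible 2×2 matrix over ℚ(q). -/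
def Sq : (Matrix (Fin 2) (Fin 2) K)ˣ where
  val := !![0, -q⁻¹; 1, 0]
  inv := !![0, 1; -q, 0]
  val_inv := by
    have hq : (q : K) ≠ 0 := RatFunc.X_ne_zero
    ext i j
    fin_cases i <;> fin_cases j <;>
      simp [Matrix.mul_apply, Fin.sum_univ_two, inv_mul_cancel₀ hq]
  inv_val := by
    have hq : (q : K) ≠ 0 := RatFunc.X_ne_zero
    ext i j
    fin_cases i <;> fin_cases j <;>
      simp [Matrix.mul_apply, Fin.sum_univ_two, mul_inv_cancel₀ hq]

/-- The product σ_{1,q}^{-c_1}·S_q·σ_{1,q}^{-c_2}·S_q⋯σ_{1,q}^{-c_k}·S_q. -/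
def prodCS : List ℤ → (Matrix (Fin 2) (Fin 2) K)ˣ
  | [] => 1
  | c :: rest => σ1 ^ (-c) * Sq * prodCS rest

/-- The product σ_{1,q}^{-a_1}·σ_{2,q}^{a_2}⋯σ_{1,q}^{-a_{2m-1}}·σ_{2,q}^{a_{2m}}. -/
def prodReg : List ℤ → (Matrix (Fin 2) (Fin 2) K)ˣ
  | [] => 1
  | [a] => σ1 ^ (-a)
  | a :: b :: rest => σ1 ^ (-a) * σ2 ^ b * prodReg rest

/-- The sum a_2 + a_4 + ⋯ of the even-indexed entries. -/
def evenSum : List ℤ → ℤ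
  | [] => 0
  | [_] => 0
  | _ :: b :: rest => b + evenSum rest

/-- Möbius action of a 2×2 matrix on ℚ(q). -/
def mobius (A : Matrix (Fin 2) (Fin 2) K) (x : K) : K :=
  (A 0 0 * x + A 0 1) / (A 1 0 * x + A 1 1)

lemma hq0 : (q : K) ≠ 0 := RatFunc.X_ne_zero
lemma h1q : (1 : K) - q ≠ 0 := by
  intro h
  have h1 : (q : K) = 1 := by linear_combination -h
  have h2 : (algebraMap (Polynomial ℚ) (RatFunc ℚ)) Polynomial.X = (algebraMap (Polynomial ℚ) (RatFunc ℚ)) (Polynomial.C 1) := by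
    simpa [RatFunc.algebraMap_X, q] using h1
  exact Polynomial.X_ne_C 1 (RatFunc.algebraMap_injective ℚ h2)

lemma zq (a b : ℤ) : (q : K) ^ (a + b) = q ^ a * q ^ b := zpow_add₀ hq0 a b
lemma q2 : (q:K)^(2:ℤ) = q * q := by rw [show (2:ℤ) = 1+1 by rfl, zq, zpow_one]

lemma qf_eq (c : ℤ) : qf c = qs c - q ^ (c - 1) * (1 - q) := by
  unfold qf qs qfX qsX
  rw [zpow_sub₀ hq0, zpow_add₀ hq0, zpow_one]
  field_simp [hq0, h1q]
  ring

lemma qf_sub_one (c : ℤ) : qf (c - 1) = qs c - q ^ (c - 2) := by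
  unfold qf qs qfX qsX
  rw [show c - 1 - 1 = c - 2 by ring, show c - 1 + 1 = c by ring,
    zpow_sub₀ hq0, zpow_sub₀ hq0, zpow_one, q2]
  field_simp [hq0, h1q]
  ring

lemma qf_base (c : ℤ) : qf c = q * qf (c - 1) + 1 := by
  unfold qf qfX
  rw [show c - 1 - 1 = c - 2 by ring, show c - 1 + 1 = c by ring,
    zpow_sub₀ hq0, zpow_sub₀ hq0, zpow_add₀ hq0, zpow_one, q2]
  field_simp [hq0, h1q]
  ring

lemma qf_two : qf 2 = 1 + q ^ (2:ℤ) := by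
  unfold qf qfX
  rw [show (2:ℤ) - 1 = 1 by rfl, show (2:ℤ) + 1 = 2 + 1 by rfl, zq, zpow_one, q2]
  field_simp [h1q]
  ring

lemma qs_two : qs 2 = 1 + q := by
  unfold qs qsX
  rw [q2]
  field_simp [h1q]
  ring

lemma e_cons (c : ℤ) (M : List ℤ) :
    Eflat (c :: M) = qs c * Eflat M - q ^ (c - 1) * EflatD M := by
  cases M with
  | nil =>
    show Eflat [c] = qs c * 1 - q ^ (c-1) * (1 - q)
    rw [mul_one]
    exact qf_eq c
  | cons d rest => rfl

lemma eflatD_cons (c : ℤ) (M : List ℤ) : EflatD (c :: M) = Eflat M := rfl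

lemma eflat_single (c : ℤ) : Eflat [c] = qf c := rfl

lemma grec (n : ℕ) :
    Eflat (List.replicate (n + 1) 2) = Eflat (List.replicate n 2) + q ^ ((n : ℤ) + 2) := by
  induction n with
  | zero =>
    show Eflat [2] = Eflat [] + q ^ ((0:ℤ) + 2)
    show qf 2 = 1 + q ^ ((0:ℤ) + 2)
    rw [qf_two]; norm_num
  | succ m ih =>
    have h1 : List.replicate (m + 1 + 1) 2 = (2 : ℤ) :: List.replicate (m + 1) 2 := rfl
    have h2 : List.replicate (m + 1) 2 = (2 : ℤ) :: List.replicate m 2 := rfl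
    have hEd : EflatD (List.replicate (m + 1) 2) = Eflat (List.replicate m 2) := by
      rw [h2]; rfl
    rw [h1, e_cons, hEd, ih, qs_two]
    have e : (q:K) ^ ((↑(m+1):ℤ) + 2) = q ^ ((m:ℤ)+2) * q := by
      push_cast
      rw [show (m:ℤ)+1+2 = ((m:ℤ)+2)+1 by ring, zq, zpow_one]
    rw [e, show (2:ℤ)-1 = 1 from rfl, zpow_one]
    ring

lemma dgap (n : ℕ) :
    Eflat (List.replicate n 2) = q ^ ((n : ℤ) + 1) + EflatD (List.replicate n 2) := by
  cases n with
  | zero =>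
    show (1 : K) = q ^ ((0:ℤ) + 1) + (1 - q)
    norm_num
  | succ m =>
    have h2 : List.replicate (m + 1) 2 = (2 : ℤ) :: List.replicate m 2 := rfl
    rw [h2, eflatD_cons, ← h2, grec m]
    push_cast
    ring_nf

lemma Ilem (c : ℤ) (n : ℕ) :
    Eflat (c :: List.replicate n 2)
      = q ^ ((n : ℤ) + 1) * Eflat [c - 1] + Eflat ((c :: List.replicate n 2).dropLast) := by
  induction n with
  | zero =>
    show Eflat [c] = q ^ ((0:ℤ)+1) * Eflat [c-1] + Eflat []
    show qf c = q ^ ((0:ℤ)+1) * qf (c-1) + 1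
    rw [zero_add, zpow_one]
    exact qf_base c
  | succ m _ =>
    have hdrop : (c :: List.replicate (m + 1) 2).dropLast = c :: List.replicate m 2 := by
      rw [show c :: List.replicate (m+1) 2 = (c :: List.replicate m 2) ++ [2] by
        simp [List.replicate_succ']
      ]
      exact List.dropLast_concat
    have h2 : List.replicate (m + 1) 2 = (2 : ℤ) :: List.replicate m 2 := rfl
    have hEd1 : EflatD (List.replicate (m + 1) 2) = Eflat (List.replicate m 2) := by
      rw [h2]; rfl
    rw [hdrop, eflat_single, qf_sub_one,
      e_cons c (List.replicate (m + 1) 2), e_cons c (List.replicate m 2),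
      hEd1, grec m]
    have hEd : EflatD (List.replicate m 2) = Eflat (List.replicate m 2) - q ^ ((m:ℤ)+1) := by
      linear_combination -dgap m
    rw [hEd]
    push_cast
    rw [show ((m:ℤ) + 1) + 1 = (m:ℤ) + 2 by ring]
    have e1 : (q:K) ^ ((m:ℤ)+2) = q ^ ((m:ℤ)+1) * q := by rw [show (m:ℤ)+2 = ((m:ℤ)+1)+1 by ring, zq, zpow_one]
    have e2 : (q:K) ^ (c-1) = q ^ (c-2) * q := by rw [show c-1 = (c-2)+1 by ring, zq, zpow_one]
    rw [e1, e2]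
    ring

lemma transfer (a b : K) (X Y Z : List ℤ)
    (hX : Eflat X = a * Eflat Y + b * Eflat Z)
    (hD : EflatD X = a * EflatD Y + b * EflatD Z) (T : List ℤ) :
    Eflat (T ++ X) = a * Eflat (T ++ Y) + b * Eflat (T ++ Z) ∧
      EflatD (T ++ X) = a * EflatD (T ++ Y) + b * EflatD (T ++ Z) := by
  induction T with
  | nil => exact ⟨hX, hD⟩
  | cons c T ih =>
    obtain ⟨ihe, ihd⟩ := ih
    refine ⟨?_, ?_⟩
    · simp only [List.cons_append, e_cons, ihe, ihd]
      ring
    · simp only [List.cons_append, eflatD_cons]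
      exact ihe

/-- numerator identity for the q-deformed Farey sum of left q-deformed
rational numbers.  Here `L = (c_1,…,c_l)` with c_1 ≥ 1, c_2,…,c_l ≥ 2, c_l > 2, and
the full sequence is `L ++ (2,…,2)` with `n = k - l` copies of 2. -/
theorem Eflat_farey_numerator (L : List ℤ) (hL : L ≠ [])
    (h1 : 1 ≤ L.head!) (h2 : ∀ x ∈ L.tail, 2 ≤ x) (h3 : 2 < L.getLast!) (n : ℕ) :
    Eflat (L ++ List.replicate n 2)
      = q ^ ((n : ℤ) + 1) * Eflat (L.dropLast ++ [L.getLast! - 1])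
        + Eflat ((L ++ List.replicate n 2).dropLast) := by
  have hgl : L.getLast! = L.getLast hL :=
    List.getLast!_of_getLast? (List.getLast?_eq_getLast hL)
  set c := L.getLast! with hc
  set T := L.dropLast with hT
  have hdec : L = T ++ [c] := by
    rw [hgl, hT]
    exact (List.dropLast_concat_getLast hL).symm
  have hA : L ++ List.replicate n 2 = T ++ (c :: List.replicate n 2) := by
    rw [hdec, List.append_assoc]
    rfl
  have hB : (L ++ List.replicate n 2).dropLast = T ++ (c :: List.replicate n 2).dropLast := by
    rw [hA]
    exact List.dropLast_append_of_ne_nil (l' := T) (by simp)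
  rw [hB, hA]
  have hI : Eflat (c :: List.replicate n 2)
      = q ^ ((n:ℤ)+1) * Eflat [c-1] + 1 * Eflat ((c :: List.replicate n 2).dropLast) := by
    rw [one_mul]; exact Ilem c n
  have hII : EflatD (c :: List.replicate n 2)
      = q ^ ((n:ℤ)+1) * EflatD [c-1] + 1 * EflatD ((c :: List.replicate n 2).dropLast) := by
    rw [one_mul, eflatD_cons]
    have hone : EflatD [c-1] = 1 := rfl
    rw [hone, mul_one]
    cases n with
    | zero =>
      show (1:K) = q ^ (((0:ℕ):ℤ)+1) + (1 - q)
      rw [show (((0:ℕ):ℤ)+1) = 1 by norm_num, zpow_one]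
      ring
    | succ m =>
      have hdrop : (c :: List.replicate (m + 1) 2).dropLast = c :: List.replicate m 2 := by
        rw [show c :: List.replicate (m+1) 2 = (c :: List.replicate m 2) ++ [2] by
          simp [List.replicate_succ']]
        exact List.dropLast_concat
      rw [hdrop, eflatD_cons, show (((m+1:ℕ)):ℤ)+1 = (m:ℤ)+2 by push_cast; ring]
      linear_combination grec m
  have hmain := (transfer (q ^ ((n:ℤ)+1)) 1 _ _ _ hI hII T).1
  rw [one_mul] at hmain
  exact hmain
end
end

section
/- For integers c_1 ≥ 1 and c_2, …, c_k ≥ 2, the left q-deformed negative continued fraction equals the quotient of left q-deformed Euler continuants: [[c_1,…,c_k]]^♭_q = E^♭_k(c_1,…,c_k)_q / E^♭_{k−1}(c_2,…,c_k)_q in ℚ(q). In particular, the left q-deformed rational number [[c_1,…,c_k]]^♭_q has numerator R^♭(q) = E^♭_k(c_1,…,c_k)_q and denominator S^♭(q) = E^♭_{k−1}(c_2,…,c_k)_q. -/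
noncomputable section

/-!
By the three-term recurrence of `E^♭`, the quotient `E^♭(c₁, …, c_k) / E^♭(c₂, …, c_k)` obeys the
recursion `x ↦ [c₁]^♯_q - q^(c₁-1) / x` of the continued fraction, so the identity follows by
induction once the denominators are known to be nonzero. For entries `≥ 2` every factor
`[c]^♯_q`, `[c]^♭_q` is a polynomial in `q` with constant term `1` and every `q^(c-1)` one with
constant term `0`, so `E^♭` is a polynomial with constant term `1`, hence nonzero.
-/

open Polynomial Finset

def IsPolyWithConstCoeff (f : K) (a : ℚ) : Prop :=
  ∃ p : ℚ[X], algebraMap ℚ[X] K p = f ∧ p.eval 0 = a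

namespace IsPolyWithConstCoeff

variable {f g : K} {a b : ℚ}

lemma zero : IsPolyWithConstCoeff 0 0 := ⟨0, by simp, by simp⟩

lemma one : IsPolyWithConstCoeff 1 1 := ⟨1, by simp, by simp⟩

lemma pow (n : ℕ) : IsPolyWithConstCoeff (q ^ n) (0 ^ n) :=
  ⟨X ^ n, by simp [q, RatFunc.algebraMap_X], by simp⟩

lemma geom_sum (n : ℕ) :
    IsPolyWithConstCoeff (∑ i ∈ range n, q ^ i) (∑ i ∈ range n, (0 : ℚ) ^ i) :=
  ⟨∑ i ∈ range n, X ^ i, by simp [q, RatFunc.algebraMap_X], by simp [eval_finsetSum]⟩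

lemma add (hf : IsPolyWithConstCoeff f a) (hg : IsPolyWithConstCoeff g b) :
    IsPolyWithConstCoeff (f + g) (a + b) := by
  obtain ⟨p, rfl, rfl⟩ := hf
  obtain ⟨r, rfl, rfl⟩ := hg
  exact ⟨p + r, by simp, by simp⟩

lemma sub (hf : IsPolyWithConstCoeff f a) (hg : IsPolyWithConstCoeff g b) :
    IsPolyWithConstCoeff (f - g) (a - b) := by
  obtain ⟨p, rfl, rfl⟩ := hf
  obtain ⟨r, rfl, rfl⟩ := hg
  exact ⟨p - r, by simp, by simp⟩

lemma mul (hf : IsPolyWithConstCoeff f a) (hg : IsPolyWithConstCoeff g b) :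
    IsPolyWithConstCoeff (f * g) (a * b) := by
  obtain ⟨p, rfl, rfl⟩ := hf
  obtain ⟨r, rfl, rfl⟩ := hg
  exact ⟨p * r, by simp, by simp⟩

lemma unique (hf : IsPolyWithConstCoeff f a) (hf' : IsPolyWithConstCoeff f b) : a = b := by
  obtain ⟨p, hp, rfl⟩ := hf
  obtain ⟨r, rfl, rfl⟩ := hf'
  rw [RatFunc.algebraMap_injective ℚ hp]

lemma ne_zero (hf : IsPolyWithConstCoeff f a) (ha : a ≠ 0) : f ≠ 0 := by
  rintro rfl
  exact ha (hf.unique zero)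

end IsPolyWithConstCoeff

lemma q_ne_zero : q ≠ 0 := RatFunc.X_ne_zero

lemma q_ne_one : q ≠ 1 := by
  intro h
  have h₀ : IsPolyWithConstCoeff q 0 := by simpa using IsPolyWithConstCoeff.pow 1
  exact zero_ne_one (h₀.unique (h ▸ IsPolyWithConstCoeff.one))

lemma qsX_natCast {x : K} (hx : x ≠ 1) (n : ℕ) : qsX x n = ∑ i ∈ range n, x ^ i := by
  rw [qsX, geom_sum_eq hx, zpow_natCast, ← neg_sub, ← neg_sub x, neg_div_neg_eq]

lemma qfX_eq_qsX_sub_one_add {x : K} (hx₀ : x ≠ 0) (hx₁ : x ≠ 1) (c : ℤ) :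
    qfX x c = qsX x (c - 1) + x ^ c := by
  have hx : 1 - x ≠ 0 := sub_ne_zero.2 hx₁.symm
  rw [qfX, qsX, zpow_add_one₀ hx₀, zpow_sub_one₀ hx₀]
  field_simp
  ring

lemma isPolyWithConstCoeff_qs {c : ℤ} (hc : 1 ≤ c) : IsPolyWithConstCoeff (qs c) 1 := by
  obtain ⟨n, rfl⟩ : ∃ n : ℕ, c = n + 1 := ⟨(c - 1).toNat, by omega⟩
  rw [qs, ← Nat.cast_succ, qsX_natCast q_ne_one]
  simpa [sum_range_succ'] using IsPolyWithConstCoeff.geom_sum (n + 1)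

lemma isPolyWithConstCoeff_q_zpow {c : ℤ} (hc : 1 ≤ c) : IsPolyWithConstCoeff (q ^ c) 0 := by
  obtain ⟨n, rfl⟩ : ∃ n : ℕ, c = n + 1 := ⟨(c - 1).toNat, by omega⟩
  rw [← Nat.cast_succ, zpow_natCast]
  simpa using IsPolyWithConstCoeff.pow (n + 1)

lemma isPolyWithConstCoeff_qf {c : ℤ} (hc : 2 ≤ c) : IsPolyWithConstCoeff (qf c) 1 := by
  rw [qf, qfX_eq_qsX_sub_one_add q_ne_zero q_ne_one]
  simpa [qs] using (isPolyWithConstCoeff_qs (by omega : 1 ≤ c - 1)).add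
    (isPolyWithConstCoeff_q_zpow (by omega : 1 ≤ c))

lemma Eflat_cons_cons (c d : ℤ) (rest : List ℤ) :
    Eflat (c :: d :: rest) = qs c * Eflat (d :: rest) - q ^ (c - 1) * Eflat rest :=
  rfl

lemma isPolyWithConstCoeff_Eflat :
    ∀ L : List ℤ, (∀ c ∈ L, 2 ≤ c) → IsPolyWithConstCoeff (Eflat L) 1
  | [], _ => IsPolyWithConstCoeff.one
  | [c], h => isPolyWithConstCoeff_qf (h c (by simp))
  | c :: d :: rest, h => by
    obtain ⟨hc, hdrest⟩ := List.forall_mem_cons.1 h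
    have h₁ := isPolyWithConstCoeff_Eflat (d :: rest) hdrest
    have h₀ := isPolyWithConstCoeff_Eflat rest (List.forall_mem_cons.1 hdrest).2
    rw [Eflat_cons_cons]
    simpa using ((isPolyWithConstCoeff_qs (by omega : 1 ≤ c)).mul h₁).sub
      ((isPolyWithConstCoeff_q_zpow (by omega : 1 ≤ c - 1)).mul h₀)

lemma Eflat_ne_zero {L : List ℤ} (h : ∀ c ∈ L, 2 ≤ c) : Eflat L ≠ 0 :=
  (isPolyWithConstCoeff_Eflat L h).ne_zero one_ne_zero

theorem nflat_eq_Eflat_div_general (c1 : ℤ) (cs : List ℤ)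
    (hcs : ∀ x ∈ cs, 2 ≤ x) :
    nflat (c1 :: cs) = Eflat (c1 :: cs) / Eflat cs := by
  induction cs generalizing c1 with
  | nil => simp [nflat, Eflat, EflatX, qf]
  | cons d rest ih =>
    have hE : Eflat (d :: rest) ≠ 0 := Eflat_ne_zero hcs
    rw [nflat, ih d (List.forall_mem_cons.1 hcs).2, div_div_eq_mul_div, Eflat_cons_cons]
    field_simp

/-- the left q-deformed negative continued fraction is the quotient of
left q-deformed Euler continuants. -/
theorem nflat_eq_Eflat_div (c1 : ℤ) (cs : List ℤ)
    (hc1 : 1 ≤ c1) (hcs : ∀ x ∈ cs, 2 ≤ x) :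
    nflat (c1 :: cs) = Eflat (c1 :: cs) / Eflat cs :=
  nflat_eq_Eflat_div_general c1 cs hcs
end
end
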